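/- Let k and r be positive integers. Let ω₄ be the smallest singular value (the 2k(k+1)r²-th largest singular value) of the 2k(k+1)r² × (2k²+2k+1)r² block matrix [[E_kᵀ⊗I_{kr²}, I_{(k+1)r}⊗E_k⊗I_r],[F_kᵀ⊗I_{kr²}, I_{(k+1)r}⊗F_k⊗I_r]]. Then ω₄ = 2·sin(π/(8k−2)); in particular, ω₄ ≥ 3/(4k−1). -/

import Mathlib

open Matrix
open scoped Kronecker

noncomputable section

/-- The `k × (k+1)` matrix `E_k = [I_k 0]`. -/
def Ek (𝕜 : Type*) [RCLike 𝕜] (k : ℕ) : Matrix (Fin k) (Fin (k+1)) 𝕜 :=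
  Matrix.of fun i j => if (j : ℕ) = (i : ℕ) then 1 else 0

/-- The `k × (k+1)` matrix `F_k = [0 I_k]`. -/
def Fk (𝕜 : Type*) [RCLike 𝕜] (k : ℕ) : Matrix (Fin k) (Fin (k+1)) 𝕜 :=
  Matrix.of fun i j => if (j : ℕ) = (i : ℕ) + 1 then 1 else 0

/-- The standard unit vector `(0, …, 0, 1)ᵀ` of size `k+1`. -/
def evec (𝕜 : Type*) [RCLike 𝕜] (k : ℕ) : Fin (k+1) → 𝕜 :=
  fun i => if (i : ℕ) = k then 1 else 0

variable {𝕜 : Type*} [RCLike 𝕜]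

/-- Frobenius norm of a matrix. -/
def frobNorm {p q : Type*} [Fintype p] [Fintype q] (M : Matrix p q 𝕜) : ℝ :=
  Real.sqrt (∑ i, ∑ j, ‖M i j‖ ^ 2)

/-- Spectral norm (largest singular value) of a matrix. -/
def specNorm {p q : Type*} [Fintype p] [Fintype q] [DecidableEq p] (M : Matrix p q 𝕜) : ℝ :=
  Real.sqrt (⨆ i, (Matrix.isHermitian_mul_conjTranspose_self M).eigenvalues i)

/-- Smallest singular value of a `p × q` matrix with `p ≤ q`
(the `p`-th largest singular value). -/
def sigmaMin {p q : Type*} [Fintype p] [Fintype q] [DecidableEq p] (M : Matrix p q 𝕜) : ℝ :=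
  Real.sqrt (⨅ i, (Matrix.isHermitian_mul_conjTranspose_self M).eigenvalues i)

/-- Euclidean norm of a vector. -/
def vecNorm {q : Type*} [Fintype q] (x : q → 𝕜) : ℝ :=
  Real.sqrt (∑ i, ‖x i‖ ^ 2)

/-- Frobenius norm of the pencil `P.1 - λ • P.2`. -/
def pFrob {p q : Type*} [Fintype p] [Fintype q] (P : Matrix p q 𝕜 × Matrix p q 𝕜) : ℝ :=
  Real.sqrt (frobNorm P.1 ^ 2 + frobNorm P.2 ^ 2)

/-- Spectral norm of the pencil `P.1 - λ • P.2`. -/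
def pSpec {p q : Type*} [Fintype p] [Fintype q] [DecidableEq p]
    (P : Matrix p q 𝕜 × Matrix p q 𝕜) : ℝ :=
  Real.sqrt (specNorm P.1 ^ 2 + specNorm P.2 ^ 2)

/-- A 3×3 block matrix. -/
def blocks3 {R1 R2 R3 C1 C2 C3 : Type*}
    (M11 : Matrix R1 C1 𝕜) (M12 : Matrix R1 C2 𝕜) (M13 : Matrix R1 C3 𝕜)
    (M21 : Matrix R2 C1 𝕜) (M22 : Matrix R2 C2 𝕜) (M23 : Matrix R2 C3 𝕜)
    (M31 : Matrix R3 C1 𝕜) (M32 : Matrix R3 C2 𝕜) (M33 : Matrix R3 C3 𝕜) :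
    Matrix (R1 ⊕ (R2 ⊕ R3)) (C1 ⊕ (C2 ⊕ C3)) 𝕜 :=
  Matrix.fromBlocks M11 (Matrix.fromCols M12 M13) (Matrix.fromRows M21 M31)
    (Matrix.fromBlocks M22 M23 M32 M33)

/-- `K̂₂ᵀ C = (e_{η+1} ⊗ I_m) C`. -/
def colUnit {m ℓ : ℕ} (η : ℕ) (C : Matrix (Fin m) (Fin ℓ) 𝕜) :
    Matrix (Fin (η+1) × Fin m) (Fin ℓ) 𝕜 :=
  Matrix.of fun i j => evec 𝕜 η i.1 * C i.2 j

/-- `B K̂₁ = B (e_{ε+1}ᵀ ⊗ I_n)`. -/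
def rowUnit {n ℓ : ℕ} (ε : ℕ) (B : Matrix (Fin ℓ) (Fin n) 𝕜) :
    Matrix (Fin ℓ) (Fin (ε+1) × Fin n) 𝕜 :=
  Matrix.of fun i j => evec 𝕜 ε j.1 * B i j.2

/-- Row index type of a block Kronecker pencil. -/
abbrev SRow (m ℓ ε η n : ℕ) := (Fin (η+1) × Fin m) ⊕ (Fin ℓ ⊕ (Fin ε × Fin n))

/-- Column index type of a block Kronecker pencil. -/
abbrev SCol (m ℓ ε η n : ℕ) := (Fin (ε+1) × Fin n) ⊕ (Fin ℓ ⊕ (Fin η × Fin m))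

/-- The block Kronecker pencil
`S(λ) = [[M(λ), K̂₂ᵀC, K₂ᵀ(λ)], [BK̂₁, A-λI, 0], [K₁(λ), 0, 0]]`
represented as a pair `(Sa, Sb)` with `S(λ) = Sa - λ Sb`. -/
def blockKron (m n ℓ ε η : ℕ) (A : Matrix (Fin ℓ) (Fin ℓ) 𝕜) (B : Matrix (Fin ℓ) (Fin n) 𝕜)
    (C : Matrix (Fin m) (Fin ℓ) 𝕜)
    (M : Matrix (Fin (η+1) × Fin m) (Fin (ε+1) × Fin n) 𝕜 ×
         Matrix (Fin (η+1) × Fin m) (Fin (ε+1) × Fin n) 𝕜) :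
    Matrix (SRow m ℓ ε η n) (SCol m ℓ ε η n) 𝕜 × Matrix (SRow m ℓ ε η n) (SCol m ℓ ε η n) 𝕜 :=
  (blocks3 M.1 (colUnit η C) ((Ek 𝕜 η)ᵀ ⊗ₖ (1 : Matrix (Fin m) (Fin m) 𝕜))
      (rowUnit ε B) A 0
      (Ek 𝕜 ε ⊗ₖ (1 : Matrix (Fin n) (Fin n) 𝕜)) 0 0,
   blocks3 M.2 0 ((Fk 𝕜 η)ᵀ ⊗ₖ (1 : Matrix (Fin m) (Fin m) 𝕜))
      0 1 0
      (Fk 𝕜 ε ⊗ₖ (1 : Matrix (Fin n) (Fin n) 𝕜)) 0 0)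

/-- Row index type of the matrix `T`. -/
abbrev TRow (m ℓ ε η n : ℕ) :=
  (((Fin η × Fin m) × Fin ℓ) ⊕ ((Fin η × Fin m) × Fin ℓ)) ⊕
  (((Fin ℓ × (Fin ε × Fin n)) ⊕ (Fin ℓ × (Fin ε × Fin n))) ⊕
   (((Fin η × Fin m) × (Fin ε × Fin n)) ⊕ ((Fin η × Fin m) × (Fin ε × Fin n))))

/-- Column index type of the matrix `T`. -/
abbrev TCol (m ℓ ε η n : ℕ) :=
  (((Fin (η+1) × Fin m) × Fin ℓ) ⊕ ((Fin η × Fin m) × Fin ℓ)) ⊕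
  (((Fin ℓ × (Fin ε × Fin n)) ⊕ (Fin ℓ × (Fin (ε+1) × Fin n))) ⊕
   (((Fin (η+1) × Fin m) × (Fin ε × Fin n)) ⊕ ((Fin η × Fin m) × (Fin (ε+1) × Fin n))))

/-- The 6×6 block matrix `T`. -/
def Tmat (m n ℓ ε η : ℕ) (A : Matrix (Fin ℓ) (Fin ℓ) 𝕜) (B : Matrix (Fin ℓ) (Fin n) 𝕜)
    (C : Matrix (Fin m) (Fin ℓ) 𝕜) : Matrix (TRow m ℓ ε η n) (TCol m ℓ ε η n) 𝕜 :=
  Matrix.fromRows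
    (Matrix.fromCols
      (Matrix.fromBlocks
        ((Ek 𝕜 η ⊗ₖ (1 : Matrix (Fin m) (Fin m) 𝕜)) ⊗ₖ (1 : Matrix (Fin ℓ) (Fin ℓ) 𝕜))
        ((1 : Matrix (Fin η × Fin m) (Fin η × Fin m) 𝕜) ⊗ₖ A)
        ((Fk 𝕜 η ⊗ₖ (1 : Matrix (Fin m) (Fin m) 𝕜)) ⊗ₖ (1 : Matrix (Fin ℓ) (Fin ℓ) 𝕜))
        ((1 : Matrix (Fin η × Fin m) (Fin η × Fin m) 𝕜) ⊗ₖ (1 : Matrix (Fin ℓ) (Fin ℓ) 𝕜)))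
      (Matrix.fromCols 0
        (Matrix.fromBlocks 0
          ((1 : Matrix (Fin η × Fin m) (Fin η × Fin m) 𝕜) ⊗ₖ (rowUnit ε B))
          0 0)))
    (Matrix.fromRows
      (Matrix.fromCols 0
        (Matrix.fromCols
          (Matrix.fromBlocks
            (Aᵀ ⊗ₖ (1 : Matrix (Fin ε × Fin n) (Fin ε × Fin n) 𝕜))
            ((1 : Matrix (Fin ℓ) (Fin ℓ) 𝕜) ⊗ₖ (Ek 𝕜 ε ⊗ₖ (1 : Matrix (Fin n) (Fin n) 𝕜)))
            ((1 : Matrix (Fin ℓ) (Fin ℓ) 𝕜) ⊗ₖ (1 : Matrix (Fin ε × Fin n) (Fin ε × Fin n) 𝕜))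
            ((1 : Matrix (Fin ℓ) (Fin ℓ) 𝕜) ⊗ₖ (Fk 𝕜 ε ⊗ₖ (1 : Matrix (Fin n) (Fin n) 𝕜))))
          (Matrix.fromBlocks
            (Matrix.of fun (i : Fin ℓ × (Fin ε × Fin n))
                (j : (Fin (η+1) × Fin m) × (Fin ε × Fin n)) =>
              evec 𝕜 η j.1.1 * C j.1.2 i.1 * (if i.2 = j.2 then 1 else 0))
            0 0 0)))
      (Matrix.fromCols 0
        (Matrix.fromCols 0
          (Matrix.fromBlocks
            ((Ek 𝕜 η ⊗ₖ (1 : Matrix (Fin m) (Fin m) 𝕜)) ⊗ₖ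
              (1 : Matrix (Fin ε × Fin n) (Fin ε × Fin n) 𝕜))
            ((1 : Matrix (Fin η × Fin m) (Fin η × Fin m) 𝕜) ⊗ₖ
              (Ek 𝕜 ε ⊗ₖ (1 : Matrix (Fin n) (Fin n) 𝕜)))
            ((Fk 𝕜 η ⊗ₖ (1 : Matrix (Fin m) (Fin m) 𝕜)) ⊗ₖ
              (1 : Matrix (Fin ε × Fin n) (Fin ε × Fin n) 𝕜))
            ((1 : Matrix (Fin η × Fin m) (Fin η × Fin m) 𝕜) ⊗ₖ
              (Fk 𝕜 ε ⊗ₖ (1 : Matrix (Fin n) (Fin n) 𝕜)))))))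

/-- The 6×6 block matrix `ΔT` built from the blocks of the perturbation pencil. -/
def DeltaT (m n ℓ ε η : ℕ)
    (Δ12a Δ12b : Matrix (Fin (η+1) × Fin m) (Fin ℓ) 𝕜)
    (Δ13a Δ13b : Matrix (Fin (η+1) × Fin m) (Fin η × Fin m) 𝕜)
    (Δ21a Δ21b : Matrix (Fin ℓ) (Fin (ε+1) × Fin n) 𝕜)
    (Δ22a Δ22b : Matrix (Fin ℓ) (Fin ℓ) 𝕜)
    (Δ23a Δ23b : Matrix (Fin ℓ) (Fin η × Fin m) 𝕜)
    (Δ31a Δ31b : Matrix (Fin ε × Fin n) (Fin (ε+1) × Fin n) 𝕜)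
    (Δ32a Δ32b : Matrix (Fin ε × Fin n) (Fin ℓ) 𝕜) :
    Matrix (TRow m ℓ ε η n) (TCol m ℓ ε η n) 𝕜 :=
  Matrix.fromRows
    (Matrix.fromCols
      (Matrix.fromBlocks
        (Δ13aᵀ ⊗ₖ (1 : Matrix (Fin ℓ) (Fin ℓ) 𝕜))
        ((1 : Matrix (Fin η × Fin m) (Fin η × Fin m) 𝕜) ⊗ₖ Δ22a)
        (Δ13bᵀ ⊗ₖ (1 : Matrix (Fin ℓ) (Fin ℓ) 𝕜))
        ((1 : Matrix (Fin η × Fin m) (Fin η × Fin m) 𝕜) ⊗ₖ Δ22b))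
      (Matrix.fromCols 0
        (Matrix.fromBlocks 0 ((1 : Matrix (Fin η × Fin m) (Fin η × Fin m) 𝕜) ⊗ₖ Δ21a)
          0 ((1 : Matrix (Fin η × Fin m) (Fin η × Fin m) 𝕜) ⊗ₖ Δ21b))))
    (Matrix.fromRows
      (Matrix.fromCols 0
        (Matrix.fromCols
          (Matrix.fromBlocks
            (Δ22aᵀ ⊗ₖ (1 : Matrix (Fin ε × Fin n) (Fin ε × Fin n) 𝕜))
            ((1 : Matrix (Fin ℓ) (Fin ℓ) 𝕜) ⊗ₖ Δ31a)
            (Δ22bᵀ ⊗ₖ (1 : Matrix (Fin ε × Fin n) (Fin ε × Fin n) 𝕜))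
            ((1 : Matrix (Fin ℓ) (Fin ℓ) 𝕜) ⊗ₖ Δ31b))
          (Matrix.fromBlocks
            (Δ12aᵀ ⊗ₖ (1 : Matrix (Fin ε × Fin n) (Fin ε × Fin n) 𝕜)) 0
            (Δ12bᵀ ⊗ₖ (1 : Matrix (Fin ε × Fin n) (Fin ε × Fin n) 𝕜)) 0)))
      (Matrix.fromCols
        (Matrix.fromBlocks 0 ((1 : Matrix (Fin η × Fin m) (Fin η × Fin m) 𝕜) ⊗ₖ Δ32a)
          0 ((1 : Matrix (Fin η × Fin m) (Fin η × Fin m) 𝕜) ⊗ₖ Δ32b))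
        (Matrix.fromCols
          (Matrix.fromBlocks
            (Δ23aᵀ ⊗ₖ (1 : Matrix (Fin ε × Fin n) (Fin ε × Fin n) 𝕜)) 0
            (Δ23bᵀ ⊗ₖ (1 : Matrix (Fin ε × Fin n) (Fin ε × Fin n) 𝕜)) 0)
          (Matrix.fromBlocks
            (Δ13aᵀ ⊗ₖ (1 : Matrix (Fin ε × Fin n) (Fin ε × Fin n) 𝕜))
            ((1 : Matrix (Fin η × Fin m) (Fin η × Fin m) 𝕜) ⊗ₖ Δ31a)
            (Δ13bᵀ ⊗ₖ (1 : Matrix (Fin ε × Fin n) (Fin ε × Fin n) 𝕜))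
            ((1 : Matrix (Fin η × Fin m) (Fin η × Fin m) 𝕜) ⊗ₖ Δ31b)))))

/-- `(Λ_k(x) ⊗ I_m)` where `Λ_k(x) = (x^k, …, x, 1)ᵀ`. -/
def LamI (𝕜 : Type*) [RCLike 𝕜] (k m : ℕ) (x : 𝕜) :
    Matrix (Fin (k+1) × Fin m) (Fin m) 𝕜 :=
  Matrix.of fun i j => if i.2 = j then x ^ (k - (i.1 : ℕ)) else 0

/-- `(A, B)` is controllable if the controllability matrix `[B, AB, …, A^{ℓ-1}B]`
has full rank `ℓ`. -/
def Controllable {ℓ n : ℕ} (A : Matrix (Fin ℓ) (Fin ℓ) 𝕜)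
    (B : Matrix (Fin ℓ) (Fin n) 𝕜) : Prop :=
  (Matrix.of fun (i : Fin ℓ) (p : Fin ℓ × Fin n) => (A ^ (p.1 : ℕ) * B) i p.2).rank = ℓ

/-- `(A, C)` is observable if `(Aᵀ, Cᵀ)` is controllable. -/
def Observable {ℓ m : ℕ} (A : Matrix (Fin ℓ) (Fin ℓ) 𝕜)
    (C : Matrix (Fin m) (Fin ℓ) 𝕜) : Prop :=
  Controllable Aᵀ Cᵀ

end

/-!
Index the rows of `M` by vertices `u(a, b)` and `v(a, b)` (`a ≤ k`, `b < k`) and read its columns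
as edges: column `(c, b)` of the first block joins `u(c, b)` to `v(c + 1, b)`, column `(a, d)` of the
second joins `u(a, d)` to `v(a, d - 1)`, and is a pendant edge at `u(a, 0)` or `v(a, k - 1)` where
the other end is missing; the coordinates in `Fin r` are carried along unchanged. The graph is a
disjoint union of paths: `u(a, b)` lies on path `a - b` at position `2a + 1`, and `v(a, b)` on path
`a - b - 1` at position `2a`. A path ends either in a pendant edge or at a free end (`u(k, b)`,
`v(0, b)`), and flipping the sign on the `v`-rows turns `‖Mᵀx‖²` into a path Laplacian with
Dirichlet conditions at pendant ends and Neumann conditions at free ends. The longest path with a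
single pendant end has `2k - 1` vertices, and its lowest mode `sin((p - 2) θ)`, `θ = π / (4k - 1)`,
gives an eigenvector of `M Mᵀ` for `μ = 2 - 2 cos θ = (2 sin (π / (8k - 2)))²`. No eigenvalue is
smaller, by Barta's inequality applied to a positive test vector `cos((p - c) θ)` whose centre `c`
is chosen per path so that it is a supersolution at every end.
-/

open Finset Real

theorem sigmaMin_eq_sqrt_of_eigenvector {ι κ : Type*} [Fintype ι] [Fintype κ] [DecidableEq ι]
    (B : Matrix ι κ ℝ) {μ : ℝ} {w : ι → ℝ} (hw : w ≠ 0) (hBw : B *ᵥ (Bᵀ *ᵥ w) = μ • w)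
    (hμ : ∀ x : ι → ℝ, μ * (x ⬝ᵥ x) ≤ (Bᵀ *ᵥ x) ⬝ᵥ (Bᵀ *ᵥ x)) :
    sigmaMin B = √μ := by
  have hBB : B * Bᴴ = B * Bᵀ := by rw [conjTranspose_eq_transpose_of_trivial]
  have : Nonempty ι := by
    by_contra h
    exact hw (funext fun i => (h ⟨i⟩).elim)
  unfold sigmaMin
  set hH := isHermitian_mul_conjTranspose_self B
  congr 1
  apply le_antisymm
  · have hspec : μ ∈ spectrum ℝ (B * Bᴴ) := by
      rw [← spectrum_toLin']
      refine Module.End.hasEigenvalue_of_hasEigenvector (x := w) ⟨?_, hw⟩ |>.mem_spectrum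
      rw [Module.End.mem_eigenspace_iff, toLin'_apply, hBB, ← mulVec_mulVec, hBw]
    obtain ⟨i, hi⟩ := hH.spectrum_real_eq_range_eigenvalues ▸ hspec
    exact hi ▸ ciInf_le (Set.finite_range _).bddBelow i
  · refine le_ciInf fun i => ?_
    set v : ι → ℝ := ⇑(hH.eigenvectorBasis i)
    have hv : v ⬝ᵥ v = 1 := by
      have h := real_inner_self_eq_norm_sq (hH.eigenvectorBasis i)
      rw [hH.eigenvectorBasis.orthonormal.1 i, EuclideanSpace.inner_eq_star_dotProduct] at h
      simp only [one_pow, star_trivial] at h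
      exact h
    have hquad : (Bᵀ *ᵥ v) ⬝ᵥ (Bᵀ *ᵥ v) = hH.eigenvalues i := by
      rw [mulVec_transpose, ← dotProduct_mulVec, ← mulVec_transpose, mulVec_mulVec, ← hBB,
        hH.mulVec_eigenvectorBasis, dotProduct_smul, hv, smul_eq_mul, mul_one]
    simpa [hv, hquad] using hμ v

theorem sum_mul_sum_mul_sq_le_sq_sum {ι : Type*} [Fintype ι] (p y : ι → ℝ)
    (hp : ∀ i j, i ≠ j → p i * p j ≤ 0) :
    (∑ i, p i) * ∑ i, p i * y i ^ 2 ≤ (∑ i, p i * y i) ^ 2 := by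
  have hvar : ∑ i, ∑ j, p i * p j * (y i - y j) ^ 2 =
      2 * ((∑ i, p i) * ∑ i, p i * y i ^ 2 - (∑ i, p i * y i) ^ 2) := by
    have hsymm : ∑ i, ∑ j, p i * p j * y i ^ 2 = ∑ i, ∑ j, p i * p j * y j ^ 2 := by
      rw [sum_comm]; simp only [mul_comm (p _) (p _)]
    calc ∑ i, ∑ j, p i * p j * (y i - y j) ^ 2
        = ∑ i, ∑ j, p i * p j * y i ^ 2 + ∑ i, ∑ j, p i * p j * y j ^ 2
          - 2 * ∑ i, ∑ j, p i * y i * (p j * y j) := by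
          simp only [mul_sum, ← sum_add_distrib, ← sum_sub_distrib]
          exact sum_congr rfl fun i _ => sum_congr rfl fun j _ => by ring
      _ = 2 * ((∑ i, p i) * ∑ i, p i * y i ^ 2 - (∑ i, p i * y i) ^ 2) := by
          rw [hsymm, sq, sum_mul_sum, sum_mul_sum]
          simp only [mul_assoc]
          ring
  have hnonpos : ∑ i, ∑ j, p i * p j * (y i - y j) ^ 2 ≤ 0 := by
    refine sum_nonpos fun i _ => sum_nonpos fun j _ => ?_
    rcases eq_or_ne i j with rfl | hij
    · simp
    · exact mul_nonpos_of_nonpos_of_nonneg (hp i j hij) (sq_nonneg _)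
  linarith

-- Barta's inequality: writing `x = ψ * y`, `sum_mul_sum_mul_sq_le_sq_sum` bounds the `j`-th term of
-- `‖Bᵀ x‖²` below by `(Bᵀ ψ) j * ∑ i, B i j * ψ i * y i ^ 2`.
theorem mul_dotProduct_self_le_of_supersolution {ι κ : Type*} [Fintype ι] [Fintype κ]
    (B : Matrix ι κ ℝ) (ψ : ι → ℝ) {μ : ℝ} (hψ : ∀ i, ψ i ≠ 0)
    (hsign : ∀ j i i', i ≠ i' → B i j * ψ i * (B i' j * ψ i') ≤ 0)
    (hμ : ∀ i, μ * ψ i ^ 2 ≤ ψ i * (B *ᵥ (Bᵀ *ᵥ ψ)) i) (x : ι → ℝ) :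
    μ * (x ⬝ᵥ x) ≤ (Bᵀ *ᵥ x) ⬝ᵥ (Bᵀ *ᵥ x) := by
  set y : ι → ℝ := fun i => x i / ψ i
  have hx : ∀ i, x i = ψ i * y i := fun i => (mul_div_cancel₀ _ (hψ i)).symm
  have hcol : ∀ j, (Bᵀ *ᵥ ψ) j * ∑ i, B i j * ψ i * y i ^ 2 ≤ (Bᵀ *ᵥ x) j ^ 2 := by
    intro j
    have h := sum_mul_sum_mul_sq_le_sq_sum (fun i => B i j * ψ i) y (hsign j)
    simpa [mulVec, dotProduct, hx, mul_assoc] using h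
  calc μ * (x ⬝ᵥ x) = ∑ i, y i ^ 2 * (μ * ψ i ^ 2) := by
        simp only [dotProduct, mul_sum, hx]; exact sum_congr rfl fun i _ => by ring
    _ ≤ ∑ i, y i ^ 2 * (ψ i * (B *ᵥ (Bᵀ *ᵥ ψ)) i) :=
        sum_le_sum fun i _ => mul_le_mul_of_nonneg_left (hμ i) (sq_nonneg _)
    _ = ∑ j, (Bᵀ *ᵥ ψ) j * ∑ i, B i j * ψ i * y i ^ 2 := by
        simp only [mulVec, dotProduct, mul_sum, sum_mul]
        rw [sum_comm]
        exact sum_congr rfl fun j _ => sum_congr rfl fun i _ => sum_congr rfl fun l _ => by ring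
    _ ≤ ∑ j, (Bᵀ *ᵥ x) j ^ 2 := sum_le_sum fun j _ => hcol j
    _ = (Bᵀ *ᵥ x) ⬝ᵥ (Bᵀ *ᵥ x) := by simp only [dotProduct, sq]

theorem mul_mul_nonpos_of_bipartite {ι₁ ι₂ κ : Type*} (B : Matrix (ι₁ ⊕ ι₂) κ ℝ)
    (hB : ∀ i j, 0 ≤ B i j)
    (h₁ : ∀ j (i i' : ι₁), i ≠ i' → B (.inl i) j * B (.inl i') j = 0)
    (h₂ : ∀ j (i i' : ι₂), i ≠ i' → B (.inr i) j * B (.inr i') j = 0)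
    {u : ι₁ → ℝ} {v : ι₂ → ℝ} (hu : ∀ i, 0 < u i) (hv : ∀ i, 0 < v i) (j : κ)
    (i i' : ι₁ ⊕ ι₂) (h : i ≠ i') :
    B i j * Sum.elim u (fun i => -v i) i * (B i' j * Sum.elim u (fun i => -v i) i') ≤ 0 := by
  rcases i with i | i <;> rcases i' with i' | i' <;> simp only [Sum.elim_inl, Sum.elim_inr]
  · have h0 := h₁ j i i' (fun hii => h (congrArg _ hii))
    linear_combination (u i * u i') * h0
  · nlinarith [mul_nonneg (mul_nonneg (hB (.inl i) j) (hB (.inr i') j)) (mul_pos (hu i) (hv i')).le]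
  · nlinarith [mul_nonneg (mul_nonneg (hB (.inr i) j) (hB (.inl i') j)) (mul_pos (hv i) (hu i')).le]
  · have h0 := h₂ j i i' (fun hii => h (congrArg _ hii))
    linear_combination (v i * v i') * h0

theorem sum_ite_val_eq {n : ℕ} (m : ℕ) (f : Fin n → ℝ) :
    ∑ c : Fin n, (if (c : ℕ) = m then f c else 0) = if h : m < n then f ⟨m, h⟩ else 0 := by
  split_ifs with h
  · rw [sum_eq_single ⟨m, h⟩ (fun c _ hc => if_neg fun hcm => hc (Fin.ext hcm)) (by simp)]
    simp
  · exact sum_eq_zero fun c _ => if_neg fun hcm => h (by omega)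

theorem sum_ite_eq_val {n : ℕ} (m : ℕ) (f : Fin n → ℝ) :
    ∑ c : Fin n, (if m = (c : ℕ) then f c else 0) = if h : m < n then f ⟨m, h⟩ else 0 := by
  simp_rw [eq_comm (a := m), sum_ite_val_eq]

theorem sum_ite_eq_val_add_one {n : ℕ} (m : ℕ) (f : Fin n → ℝ) :
    ∑ c : Fin n, (if m = (c : ℕ) + 1 then f c else 0) =
      if h : 0 < m ∧ m ≤ n then f ⟨m - 1, by omega⟩ else 0 := by
  rcases m with _ | m
  · simp
  · simp only [Nat.add_right_cancel_iff, sum_ite_eq_val, Nat.add_sub_cancel]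
    exact dite_congr (propext (by omega)) (fun _ => rfl) (fun _ => rfl)

namespace Omega4

noncomputable def θ (k : ℕ) : ℝ := π / (4 * k - 1)

noncomputable def μ (k : ℕ) : ℝ := 2 - 2 * cos (θ k)

variable {k r : ℕ}

theorem θ_pos (hk : 0 < k) : 0 < θ k := by
  have : (1 : ℝ) ≤ k := by exact_mod_cast hk
  exact div_pos pi_pos (by linarith)

theorem mul_θ_eq_pi_div_two (hk : 0 < k) : (2 * k - 1 / 2 : ℝ) * θ k = π / 2 := by
  have : (1 : ℝ) ≤ k := by exact_mod_cast hk
  rw [θ, mul_div_assoc', div_eq_iff (by linarith)]; ring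

theorem sin_two_mul_θ_eq (hk : 0 < k) : sin (2 * k * θ k) = sin ((2 * k - 1) * θ k) := by
  have : (2 * k : ℝ) * θ k = π - (2 * k - 1) * θ k := by
    have := mul_θ_eq_pi_div_two hk; linarith
  rw [this, sin_pi_sub]

theorem sqrt_μ (hk : 0 < k) : √(μ k) = 2 * sin (π / (8 * k - 2)) := by
  have : (1 : ℝ) ≤ k := by exact_mod_cast hk
  have hθ : θ k = 2 * (π / (8 * k - 2)) := by
    rw [θ, mul_div_assoc', div_eq_div_iff (by linarith) (by linarith)]; ring
  have hsin : 0 ≤ sin (π / (8 * k - 2)) :=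
    sin_nonneg_of_nonneg_of_le_pi (div_nonneg pi_pos.le (by linarith))
      (div_le_self pi_pos.le (by linarith))
  rw [μ, hθ, cos_two_mul_eq_one_sub, ← sqrt_sq (by positivity : 0 ≤ 2 * sin (π / (8 * k - 2)))]
  congr 1; ring

theorem le_two_mul_sin_mul_pi_div_six {t : ℝ} (h0 : 0 ≤ t) (h1 : t ≤ 1) :
    t ≤ 2 * sin (t * (π / 6)) := by
  have h := strictConcaveOn_sin_Icc.concaveOn.2 (x := 0) (y := π / 6) ⟨le_rfl, pi_pos.le⟩
    ⟨by positivity, by linarith [pi_pos]⟩ (sub_nonneg.2 h1) h0 (by ring)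
  simp only [smul_eq_mul, sin_zero, sin_pi_div_six, mul_zero, zero_add] at h
  linarith

theorem div_le_two_mul_sin (hk : 0 < k) : 3 / (4 * k - 1 : ℝ) ≤ 2 * sin (π / (8 * k - 2)) := by
  have : (1 : ℝ) ≤ k := by exact_mod_cast hk
  have h := le_two_mul_sin_mul_pi_div_six (t := 3 / (4 * k - 1))
    (div_nonneg (by norm_num) (by linarith)) ((div_le_one (by linarith)).2 (by linarith))
  convert h using 3
  rw [div_mul_div_comm, div_eq_div_iff (by linarith) (by nlinarith)]; ring

-- The cosine on path `t` is symmetric about the midpoint between its free end and the missing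
-- neighbour beyond it (`2k + 3/2` for `t > 0`, `-1/2` for `t < 0`); the paths `t = 0` have two
-- pendant ends and use their midpoint.
noncomputable def center (k : ℕ) (t : ℤ) : ℝ :=
  if 0 < t then 2 * k + 3 / 2 else if t = 0 then k + 1 / 2 else -1 / 2

noncomputable def testProfile (k : ℕ) (t p : ℤ) : ℝ := cos ((p - center k t) * θ k)

noncomputable def eigenProfile (k : ℕ) (t p : ℤ) : ℝ := if t = 1 then sin ((p - 2) * θ k) else 0

theorem testProfile_sub_one_add (t p : ℤ) :
    testProfile k t (p - 1) + testProfile k t (p + 1) = (2 - μ k) * testProfile k t p := by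
  simp only [testProfile, μ]
  push_cast
  rw [show ((p : ℝ) - 1 - center k t) * θ k = (p - center k t) * θ k - θ k by ring,
    show ((p : ℝ) + 1 - center k t) * θ k = (p - center k t) * θ k + θ k by ring, cos_sub, cos_add]
  ring

theorem eigenProfile_sub_one_add (t p : ℤ) :
    eigenProfile k t (p - 1) + eigenProfile k t (p + 1) = (2 - μ k) * eigenProfile k t p := by
  simp only [eigenProfile, μ]
  split_ifs
  · push_cast
    rw [show ((p : ℝ) - 1 - 2) * θ k = (p - 2) * θ k - θ k by ring,
      show ((p : ℝ) + 1 - 2) * θ k = (p - 2) * θ k + θ k by ring, sin_sub, sin_add]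
    ring
  · ring

theorem abs_sub_center_le (hk : 0 < k) {s t p : ℤ} (hs : s ≤ 1) (h0 : 0 ≤ p)
    (h1 : 2 * t + s ≤ p) (h2 : p ≤ 2 * k + 1) (h3 : p + s ≤ 2 * (t + k) + 1) :
    |(p : ℝ) - center k t| ≤ 2 * k - 1 / 2 - s := by
  have hk' : (1 : ℝ) ≤ k := by exact_mod_cast hk
  have hs' : (s : ℝ) ≤ 1 := by exact_mod_cast hs
  have h0' : (0 : ℝ) ≤ p := by exact_mod_cast h0
  have h1' : (2 * t + s : ℝ) ≤ p := by exact_mod_cast h1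
  have h2' : (p : ℝ) ≤ 2 * k + 1 := by exact_mod_cast h2
  have h3' : (p + s : ℝ) ≤ 2 * (t + k) + 1 := by exact_mod_cast h3
  rw [abs_le, center]
  split_ifs with ht ht'
  · have : (1 : ℝ) ≤ t := by exact_mod_cast ht
    constructor <;> linarith
  · have : (t : ℝ) = 0 := by exact_mod_cast ht'
    constructor <;> linarith
  · have : (t : ℝ) ≤ -1 := by exact_mod_cast (show t ≤ -1 by omega)
    constructor <;> linarith

theorem testProfile_pos (hk : 0 < k) {t p : ℤ} (h0 : 0 ≤ p) (h1 : 2 * t + 1 ≤ p)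
    (h2 : p ≤ 2 * k + 1) (h3 : p ≤ 2 * (t + k)) : 0 < testProfile k t p := by
  have hθ := θ_pos hk
  have h : |(p - center k t) * θ k| < π / 2 := by
    rw [abs_mul, abs_of_pos hθ, ← mul_θ_eq_pi_div_two hk]
    refine mul_lt_mul_of_pos_right ?_ hθ
    have := abs_sub_center_le hk le_rfl h0 h1 h2 (by omega)
    push_cast at this
    linarith
  exact cos_pos_of_mem_Ioo (abs_lt.1 h)

theorem testProfile_nonneg (hk : 0 < k) {t p : ℤ} (h0 : 0 ≤ p) (h1 : 2 * t ≤ p)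
    (h2 : p ≤ 2 * k + 1) (h3 : p ≤ 2 * (t + k) + 1) : 0 ≤ testProfile k t p := by
  have hθ := θ_pos hk
  have h : |(p - center k t) * θ k| ≤ π / 2 := by
    rw [abs_mul, abs_of_pos hθ, ← mul_θ_eq_pi_div_two hk]
    refine mul_le_mul_of_nonneg_right ?_ hθ.le
    simpa using abs_sub_center_le hk zero_le_one h0 (by omega) h2 (by omega)
  exact cos_nonneg_of_mem_Icc (abs_le.1 h)

theorem testProfile_two_mul_add_two {t : ℤ} (ht : 0 < t) :
    testProfile k t (2 * k + 2) = testProfile k t (2 * k + 1) := by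
  simp only [testProfile, center, if_pos ht]
  rw [← cos_neg]
  push_cast
  ring_nf

theorem testProfile_neg_one {t : ℤ} (ht : t < 0) : testProfile k t (-1) = testProfile k t 0 := by
  simp only [testProfile, center, if_neg (not_lt.2 ht.le), if_neg ht.ne]
  rw [← cos_neg]
  push_cast
  ring_nf

theorem eigenProfile_two_mul_add_two (hk : 0 < k) (t : ℤ) :
    eigenProfile k t (2 * k + 2) = eigenProfile k t (2 * k + 1) := by
  simp only [eigenProfile]
  split_ifs
  · push_cast
    rw [show (2 * k + 2 - 2 : ℝ) = 2 * k by ring, show (2 * k + 1 - 2 : ℝ) = 2 * k - 1 by ring,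
      sin_two_mul_θ_eq hk]
  · rfl

theorem eigenProfile_two_mul_self (t : ℤ) : eigenProfile k t (2 * t) = 0 := by
  simp only [eigenProfile]
  split_ifs with ht
  · simp [ht]
  · rfl

theorem eigenProfile_of_ne {t : ℤ} (ht : t ≠ 1) (p : ℤ) : eigenProfile k t p = 0 := if_neg ht

abbrev Vertex (k r : ℕ) := Fin (k + 1) × (Fin r × (Fin k × Fin r))

noncomputable def M (k r : ℕ) :=
  Matrix.fromBlocks
      ((Ek ℝ k)ᵀ ⊗ₖ (1 : Matrix (Fin r × (Fin k × Fin r)) (Fin r × (Fin k × Fin r)) ℝ))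
      ((1 : Matrix (Fin (k+1)) (Fin (k+1)) ℝ) ⊗ₖ ((1 : Matrix (Fin r) (Fin r) ℝ) ⊗ₖ
        (Ek ℝ k ⊗ₖ (1 : Matrix (Fin r) (Fin r) ℝ))))
      ((Fk ℝ k)ᵀ ⊗ₖ (1 : Matrix (Fin r × (Fin k × Fin r)) (Fin r × (Fin k × Fin r)) ℝ))
      ((1 : Matrix (Fin (k+1)) (Fin (k+1)) ℝ) ⊗ₖ ((1 : Matrix (Fin r) (Fin r) ℝ) ⊗ₖ
        (Fk ℝ k ⊗ₖ (1 : Matrix (Fin r) (Fin r) ℝ))))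

theorem M_nonneg (i j) : 0 ≤ M k r i j := by
  rcases i with ⟨a, ρ, b, σ⟩ | ⟨a, ρ, b, σ⟩ <;> rcases j with ⟨c, ρ', d, σ'⟩ | ⟨c, ρ', d, σ'⟩ <;>
    simp [M, Ek, Fk, one_apply] <;> split_ifs <;> norm_num

theorem M_inl_mul_inl (j) {i i' : Vertex k r} (h : i ≠ i') :
    M k r (.inl i) j * M k r (.inl i') j = 0 := by
  obtain ⟨a, ρ, b, σ⟩ := i
  obtain ⟨a', ρ'', b', σ''⟩ := i'
  rcases j with ⟨c, ρ', d, σ'⟩ | ⟨c, ρ', d, σ'⟩ <;> simp [M, Ek, Fk, one_apply] <;> grind [Fin.ext_iff]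

theorem M_inr_mul_inr (j) {i i' : Vertex k r} (h : i ≠ i') :
    M k r (.inr i) j * M k r (.inr i') j = 0 := by
  obtain ⟨a, ρ, b, σ⟩ := i
  obtain ⟨a', ρ'', b', σ''⟩ := i'
  rcases j with ⟨c, ρ', d, σ'⟩ | ⟨c, ρ', d, σ'⟩ <;> simp [M, Ek, Fk, one_apply] <;> grind [Fin.ext_iff]

def gridVec (k r : ℕ) (U V : ℕ → ℕ → ℝ) : Vertex k r ⊕ Vertex k r → ℝ :=
  Sum.elim (fun i => U i.1 i.2.2.1) (fun i => V i.1 i.2.2.1)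

def gridCol (k r : ℕ) (P Q : ℕ → ℕ → ℝ) :
    (Fin k × (Fin r × (Fin k × Fin r))) ⊕ (Fin (k + 1) × (Fin r × (Fin (k + 1) × Fin r))) → ℝ :=
  Sum.elim (fun j => P j.1 j.2.2.1) (fun j => Q j.1 j.2.2.1)

theorem transpose_mulVec_gridVec (U V : ℕ → ℕ → ℝ) :
    (M k r)ᵀ *ᵥ gridVec k r U V = gridCol k r (fun c b => U c b + V (c + 1) b)
      (fun a d => (if d < k then U a d else 0) + if 0 < d then V a (d - 1) else 0) := by
  funext j
  rcases j with ⟨c, ρ, b, σ⟩ | ⟨a, ρ, d, σ⟩ <;>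
    simp [M, gridVec, gridCol, mulVec, dotProduct, Fintype.sum_sum_type, Fintype.sum_prod_type,
      Ek, Fk, one_apply, ite_mul, sum_ite_val_eq, sum_ite_eq_val, sum_ite_eq_val_add_one,
      Fin.is_le]

theorem mulVec_gridCol (P Q : ℕ → ℕ → ℝ) :
    M k r *ᵥ gridCol k r P Q = gridVec k r (fun a b => (if a < k then P a b else 0) + Q a b)
      (fun a b => (if 0 < a then P (a - 1) b else 0) + Q a (b + 1)) := by
  funext i
  rcases i with ⟨a, ρ, b, σ⟩ | ⟨a, ρ, b, σ⟩ <;>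
    simp [M, gridVec, gridCol, mulVec, dotProduct, Fintype.sum_sum_type, Fintype.sum_prod_type,
      Ek, Fk, one_apply, ite_mul, sum_ite_val_eq, sum_ite_eq_val, sum_ite_eq_val_add_one,
      Fin.is_le]

-- At a vertex with neighbours `x` and `z` on its path, the bracketed terms are the defects at a
-- free end (`¬P`) and at a pendant end (`¬Q`).
theorem vertex_identity (P Q : Prop) [Decidable P] [Decidable Q] {ν x y z : ℝ}
    (h : x + z = (2 - ν) * y) :
    ((if P then y - x else 0) + (y - if Q then z else 0)) =
      ν * y + ((if P then 0 else x - y) + if Q then 0 else z) := by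
  split_ifs <;> linarith

-- The sign on the `v`-rows turns each edge term `(x_u + x_v)²` into a difference.
noncomputable def pathVec (k r : ℕ) (f : ℤ → ℤ → ℝ) : Vertex k r ⊕ Vertex k r → ℝ :=
  gridVec k r (fun a b => f ((a : ℤ) - b) (2 * a + 1)) (fun a b => -f ((a : ℤ) - b - 1) (2 * a))

theorem mulVec_transpose_mulVec_pathVec_inl {f : ℤ → ℤ → ℝ} {ν : ℝ}
    (hf : ∀ t p, f t (p - 1) + f t (p + 1) = (2 - ν) * f t p)
    (a : Fin (k + 1)) (ρ : Fin r) (b : Fin k) (σ : Fin r) :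
    (M k r *ᵥ ((M k r)ᵀ *ᵥ pathVec k r f)) (.inl (a, ρ, b, σ)) =
      ν * f ((a : ℤ) - b) (2 * a + 1) +
        ((if (a : ℕ) < k then 0 else f ((a : ℤ) - b) (2 * a + 2) - f ((a : ℤ) - b) (2 * a + 1)) +
          if 0 < (b : ℕ) then 0 else f ((a : ℤ) - b) (2 * a)) := by
  have h := hf ((a : ℤ) - b) (2 * a + 1)
  rw [add_sub_cancel_right, add_assoc, one_add_one_eq_two] at h
  rw [← vertex_identity _ _ (by linarith)]
  rw [pathVec, transpose_mulVec_gridVec, mulVec_gridCol]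
  simp only [gridVec, Sum.elim_inl, b.isLt, if_true]
  split_ifs <;> push_cast [Nat.cast_pred, *] <;> ring_nf

theorem mulVec_transpose_mulVec_pathVec_inr {f : ℤ → ℤ → ℝ} {ν : ℝ}
    (hf : ∀ t p, f t (p - 1) + f t (p + 1) = (2 - ν) * f t p)
    (a : Fin (k + 1)) (ρ : Fin r) (b : Fin k) (σ : Fin r) :
    (M k r *ᵥ ((M k r)ᵀ *ᵥ pathVec k r f)) (.inr (a, ρ, b, σ)) =
      -(ν * f ((a : ℤ) - b - 1) (2 * a) +
        ((if 0 < (a : ℕ) then 0 else f ((a : ℤ) - b - 1) (2 * a - 1) - f ((a : ℤ) - b - 1) (2 * a)) +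
          if (b : ℕ) + 1 < k then 0 else f ((a : ℤ) - b - 1) (2 * a + 1))) := by
  rw [← vertex_identity _ _ (hf ((a : ℤ) - b - 1) (2 * a))]
  rw [pathVec, transpose_mulVec_gridVec, mulVec_gridCol]
  simp only [gridVec, Sum.elim_inr, Nat.zero_lt_succ, if_true]
  split_ifs <;> push_cast [Nat.cast_pred, *] <;> ring_nf

theorem mulVec_transpose_mulVec_pathVec_eigenProfile (hk : 0 < k) :
    M k r *ᵥ ((M k r)ᵀ *ᵥ pathVec k r (eigenProfile k)) = μ k • pathVec k r (eigenProfile k) := by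
  funext i
  rcases i with ⟨a, ρ, b, σ⟩ | ⟨a, ρ, b, σ⟩
  · rw [mulVec_transpose_mulVec_pathVec_inl eigenProfile_sub_one_add]
    have hfree : ¬(a : ℕ) < k → eigenProfile k ((a : ℤ) - b) (2 * a + 2) =
        eigenProfile k ((a : ℤ) - b) (2 * a + 1) := fun ha => by
      rw [show (a : ℤ) = k by omega]; exact eigenProfile_two_mul_add_two hk _
    have hpend : ¬0 < (b : ℕ) → eigenProfile k ((a : ℤ) - b) (2 * a) = 0 := fun hb => by
      rw [show (b : ℤ) = 0 by omega, sub_zero]; exact eigenProfile_two_mul_self _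
    simp only [pathVec, gridVec, Pi.smul_apply, Sum.elim_inl, smul_eq_mul]
    split_ifs with ha hb hb <;> simp [*]
  · rw [mulVec_transpose_mulVec_pathVec_inr eigenProfile_sub_one_add]
    have hfree : ¬0 < (a : ℕ) → (a : ℤ) - b - 1 ≠ 1 := by omega
    have hpend : ¬(b : ℕ) + 1 < k → (a : ℤ) - b - 1 ≠ 1 := by omega
    simp only [pathVec, gridVec, Pi.smul_apply, Sum.elim_inr, smul_eq_mul]
    split_ifs with ha hb hb <;> simp [eigenProfile_of_ne, *]

theorem θ_lt_pi (hk : 0 < k) : θ k < π := by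
  have := mul_θ_eq_pi_div_two hk
  have : (1 : ℝ) ≤ k := by exact_mod_cast hk
  nlinarith [θ_pos hk, pi_pos]

theorem pathVec_eigenProfile_ne_zero (hk : 0 < k) (hr : 0 < r) :
    pathVec k r (eigenProfile k) ≠ 0 := by
  intro h
  have h1 := congrFun h (.inl (⟨1, by omega⟩, ⟨0, hr⟩, ⟨0, hk⟩, ⟨0, hr⟩))
  simp only [pathVec, gridVec, eigenProfile, Sum.elim_inl, Pi.zero_apply] at h1
  norm_num at h1
  exact (sin_pos_of_pos_of_lt_pi (θ_pos hk) (θ_lt_pi hk)).ne' h1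

theorem testProfile_inl_pos (hk : 0 < k) (i : Vertex k r) :
    0 < testProfile k ((i.1 : ℤ) - i.2.2.1) (2 * i.1 + 1) :=
  testProfile_pos hk (by omega) (by omega) (by omega) (by omega)

theorem testProfile_inr_pos (hk : 0 < k) (i : Vertex k r) :
    0 < testProfile k ((i.1 : ℤ) - i.2.2.1 - 1) (2 * i.1) :=
  testProfile_pos hk (by omega) (by omega) (by omega) (by omega)

theorem mul_sq_le_mul_add {ν f D : ℝ} (hf : 0 ≤ f) (hD : 0 ≤ D) : ν * f ^ 2 ≤ f * (ν * f + D) := by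
  nlinarith [mul_nonneg hf hD]

theorem mul_sq_le_mul_mulVec_transpose_mulVec_pathVec_testProfile (hk : 0 < k)
    (i : Vertex k r ⊕ Vertex k r) :
    μ k * pathVec k r (testProfile k) i ^ 2 ≤
      pathVec k r (testProfile k) i * (M k r *ᵥ ((M k r)ᵀ *ᵥ pathVec k r (testProfile k))) i := by
  rcases i with ⟨a, ρ, b, σ⟩ | ⟨a, ρ, b, σ⟩
  · rw [mulVec_transpose_mulVec_pathVec_inl testProfile_sub_one_add]
    refine mul_sq_le_mul_add (testProfile_inl_pos hk (a, ρ, b, σ)).le (add_nonneg ?_ ?_)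
    · split_ifs with ha
      · rfl
      · rw [show (a : ℤ) = k by omega, testProfile_two_mul_add_two (by omega), sub_self]
    · split_ifs with hb
      · rfl
      · exact testProfile_nonneg hk (by omega) (by omega) (by omega) (by omega)
  · rw [mulVec_transpose_mulVec_pathVec_inr testProfile_sub_one_add]
    show _ * (-_) ^ 2 ≤ -_ * -_
    rw [neg_sq, neg_mul_neg]
    refine mul_sq_le_mul_add (testProfile_inr_pos hk (a, ρ, b, σ)).le (add_nonneg ?_ ?_)
    · split_ifs with ha
      · rfl
      · rw [show (a : ℤ) = 0 by omega, mul_zero, zero_sub, zero_sub,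
          testProfile_neg_one (by omega), sub_self]
    · split_ifs with hb
      · rfl
      · exact testProfile_nonneg hk (by omega) (by omega) (by omega) (by omega)

theorem mul_dotProduct_self_le (hk : 0 < k) (x : Vertex k r ⊕ Vertex k r → ℝ) :
    μ k * (x ⬝ᵥ x) ≤ ((M k r)ᵀ *ᵥ x) ⬝ᵥ ((M k r)ᵀ *ᵥ x) := by
  refine mul_dotProduct_self_le_of_supersolution (M k r) (pathVec k r (testProfile k)) ?_
    (mul_mul_nonpos_of_bipartite _ M_nonneg (fun j _ _ => M_inl_mul_inl j)
      (fun j _ _ => M_inr_mul_inr j) (testProfile_inl_pos hk) (testProfile_inr_pos hk))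
    (mul_sq_le_mul_mulVec_transpose_mulVec_pathVec_testProfile hk) x
  rintro (i | i)
  · exact (testProfile_inl_pos hk i).ne'
  · exact neg_ne_zero.2 (testProfile_inr_pos hk i).ne'

end Omega4

theorem statement3 (k r : ℕ) (hk : 0 < k) (hr : 0 < r) :
    let ω₄ := sigmaMin (Matrix.fromBlocks
      ((Ek ℝ k)ᵀ ⊗ₖ (1 : Matrix (Fin r × (Fin k × Fin r)) (Fin r × (Fin k × Fin r)) ℝ))
      ((1 : Matrix (Fin (k+1)) (Fin (k+1)) ℝ) ⊗ₖ ((1 : Matrix (Fin r) (Fin r) ℝ) ⊗ₖ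
        (Ek ℝ k ⊗ₖ (1 : Matrix (Fin r) (Fin r) ℝ))))
      ((Fk ℝ k)ᵀ ⊗ₖ (1 : Matrix (Fin r × (Fin k × Fin r)) (Fin r × (Fin k × Fin r)) ℝ))
      ((1 : Matrix (Fin (k+1)) (Fin (k+1)) ℝ) ⊗ₖ ((1 : Matrix (Fin r) (Fin r) ℝ) ⊗ₖ
        (Fk ℝ k ⊗ₖ (1 : Matrix (Fin r) (Fin r) ℝ)))));
    ω₄ = 2 * Real.sin (Real.pi / (8 * (k : ℝ) - 2)) ∧ 3 / (4 * (k : ℝ) - 1) ≤ ω₄ := by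
  intro ω₄
  have hω : ω₄ = √(Omega4.μ k) :=
    sigmaMin_eq_sqrt_of_eigenvector (Omega4.M k r) (Omega4.pathVec_eigenProfile_ne_zero hk hr)
      (Omega4.mulVec_transpose_mulVec_pathVec_eigenProfile hk) (Omega4.mul_dotProduct_self_le hk)
  rw [hω, Omega4.sqrt_μ hk]
  exact ⟨rfl, Omega4.div_le_two_mul_sin hk⟩
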